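/- arXiv:1607.02962 — 2 statements merged into one kernel-verified Lean document; each statement's English description precedes it below -/
import Mathlib

section
/- Let d ≥ 1, γ > 0, and let P, Q ∈ L¹(ℝ^d) with P ≥ 0 almost everywhere satisfy the Ornstein–Zernike equation P = Q + γ Q∗P almost everywhere. Then 0 ≤ ∫_{ℝ^d} Q(x) dx < γ^{-1}, and moreover 1 + γ∫_{ℝ^d} P(x) dx = (1 − γ∫_{ℝ^d} Q(x) dx)^{-1}. (Interpreting S := 1 + γ∫P as the mean size of the cluster of a typical point, this says E|C(0)| = (1 − γ∫Q)^{-1}.) -/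
/-!
Integrating the Ornstein–Zernike equation turns the convolution into a product of integrals:
`p = q + γ q p` for `p = ∫ P` and `q = ∫ Q`. Equivalently `(1 + γ p) (1 - γ q) = 1`, so
`1 - γ q = (1 + γ p)⁻¹`, which lies in `(0, 1]` because `p ≥ 0`; this gives `0 ≤ γ q < 1`.
-/

open MeasureTheory
open scoped Convolution

noncomputable section

def conv {d : ℕ} (f g : EuclideanSpace ℝ (Fin d) → ℝ) :
    EuclideanSpace ℝ (Fin d) → ℝ :=
  fun x => ∫ y, f (x - y) * g y

section Convolution

variable {d : ℕ} {f g : EuclideanSpace ℝ (Fin d) → ℝ}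

lemma conv_eq_convolution (f g : EuclideanSpace ℝ (Fin d) → ℝ) :
    conv f g = g ⋆[ContinuousLinearMap.mul ℝ ℝ] f := by
  ext x
  simp [conv, convolution, mul_comm]

lemma MeasureTheory.Integrable.conv (hf : Integrable f) (hg : Integrable g) :
    Integrable (conv f g) := by
  rw [conv_eq_convolution]
  exact hg.integrable_convolution _ hf

lemma integral_conv (hf : Integrable f) (hg : Integrable g) :
    ∫ x, conv f g x = (∫ x, f x) * ∫ x, g x := by
  rw [conv_eq_convolution, integral_convolution _ hg hf, mul_comm]
  rfl

lemma integral_eq_of_ae_eq_add_const_mul_conv {γ : ℝ} {P Q : EuclideanSpace ℝ (Fin d) → ℝ}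
    (hP : Integrable P) (hQ : Integrable Q)
    (hOZ : ∀ᵐ x, P x = Q x + γ * conv Q P x) :
    ∫ x, P x = (∫ x, Q x) + γ * ((∫ x, Q x) * ∫ x, P x) := by
  calc ∫ x, P x = ∫ x, (Q x + γ * conv Q P x) := integral_congr_ae hOZ
    _ = _ := by
      rw [integral_add hQ ((hQ.conv hP).const_mul γ), integral_const_mul, integral_conv hQ hP]

end Convolution

lemma ornsteinZernike_scalar {γ p q : ℝ} (hγ : 0 < γ) (hp : 0 ≤ p)
    (h : p = q + γ * (q * p)) :
    0 ≤ q ∧ q < γ⁻¹ ∧ 1 + γ * p = (1 - γ * q)⁻¹ := by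
  have hprod : (1 + γ * p) * (1 - γ * q) = 1 := by linear_combination γ * h
  have hS : 1 ≤ 1 + γ * p := le_add_of_nonneg_right (mul_nonneg hγ.le hp)
  have hinv : 1 - γ * q = (1 + γ * p)⁻¹ := eq_inv_of_mul_eq_one_right hprod
  have hpos : 0 < 1 - γ * q := hinv ▸ inv_pos.2 (zero_lt_one.trans_le hS)
  have hle : 1 - γ * q ≤ 1 := hinv ▸ inv_le_one_of_one_le₀ hS
  refine ⟨nonneg_of_mul_nonneg_right (by linarith) hγ, ?_, by rw [hinv, inv_inv]⟩
  rw [← one_div, lt_div_iff₀ hγ]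
  linarith

theorem ornstein_zernike_integral_Q_general
    {d : ℕ} (γ : ℝ) (hγ : 0 < γ)
    (P Q : EuclideanSpace ℝ (Fin d) → ℝ)
    (hP1 : Integrable P) (hQ1 : Integrable Q)
    (hPpos : ∀ᵐ x : EuclideanSpace ℝ (Fin d), 0 ≤ P x)
    (hOZ : ∀ᵐ x : EuclideanSpace ℝ (Fin d), P x = Q x + γ * conv Q P x) :
    0 ≤ ∫ x, Q x ∧ (∫ x, Q x) < γ⁻¹ ∧
      1 + γ * ∫ x, P x = (1 - γ * ∫ x, Q x)⁻¹ :=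
  ornsteinZernike_scalar hγ (integral_nonneg_of_ae hPpos)
    (integral_eq_of_ae_eq_add_const_mul_conv hP1 hQ1 hOZ)

/-- If `P, Q ∈ L¹` with `P ≥ 0` a.e. satisfy the Ornstein-Zernike equation
`P = Q + γ Q ∗ P` a.e., then `0 ≤ ∫ Q < γ⁻¹` and
`1 + γ ∫ P = (1 - γ ∫ Q)⁻¹`. -/
theorem ornstein_zernike_integral_Q
    {d : ℕ} (hd : 1 ≤ d) (γ : ℝ) (hγ : 0 < γ)
    (P Q : EuclideanSpace ℝ (Fin d) → ℝ)
    (hP1 : Integrable P) (hQ1 : Integrable Q)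
    (hPpos : ∀ᵐ x : EuclideanSpace ℝ (Fin d), 0 ≤ P x)
    (hOZ : ∀ᵐ x : EuclideanSpace ℝ (Fin d), P x = Q x + γ * conv Q P x) :
    0 ≤ ∫ x, Q x ∧ (∫ x, Q x) < γ⁻¹ ∧
      1 + γ * ∫ x, P x = (1 - γ * ∫ x, Q x)⁻¹ :=
  ornstein_zernike_integral_Q_general γ hγ P Q hP1 hQ1 hPpos hOZ

end
end

section
/- Let n, m ∈ ℕ₀, G₁ ∈ 𝒢_n and G₂ ∈ 𝒢_m. Then the map (H₁, H₂) ↦ H₁ ⊙ H₂ is a bijection from the set {(H₁,H₂) ∈ 𝒢_n × 𝒢_m : E(H₁) ⊆ E(G₁) and E(H₂) ⊆ E(G₂)} onto the set {H ∈ 𝒢_{n+m+1} : E(H) ⊆ E(G₁ ⊙ G₂)}. In particular, in every connected graph H on {0,…,n+m+2} with E(H) ⊆ E(G₁ ⊙ G₂), the vertex n+1 is pivotal (every path from 0 to n+m+2 passes through it). -/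
open MeasureTheory Finset
open scoped ENNReal Classical

noncomputable section

/-- The interior vertices `{1,…,n}` of the vertex set `{0,1,…,n+1}` (as `Fin (n+2)`). -/
def interiorVerts (n : ℕ) : Finset (Fin (n + 2)) :=
  Finset.univ.filter fun v => v ≠ 0 ∧ v ≠ Fin.last (n + 1)

/-- `ConnIn G a b S` : there is a path from `a` to `b` in `G` using only
vertices in `S ∪ {a, b}`. -/
def ConnIn {k : ℕ} (G : SimpleGraph (Fin k)) (a b : Fin k) (S : Set (Fin k)) : Prop :=
  ∃ w : G.Walk a b, ∀ v ∈ w.support, v = a ∨ v = b ∨ v ∈ S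

/-- `π_n(G) = Σ_{I ⊆ [n]} (-1)^{n-|I|} 1{0 ↔ n+1 in G|I}`. -/
def piFun (n : ℕ) (G : SimpleGraph (Fin (n + 2))) : ℤ :=
  ∑ I ∈ (interiorVerts n).powerset,
    (-1 : ℤ) ^ (n - I.card) *
      (if ConnIn G 0 (Fin.last (n + 1)) ↑I then 1 else 0)

/-- The number of edges of `G`, counted via ordered pairs `i < j`. -/
def edgeCount {k : ℕ} (G : SimpleGraph (Fin k)) : ℕ :=
  (Finset.univ.filter fun p : Fin k × Fin k => p.1 < p.2 ∧ G.Adj p.1 p.2).card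

/-- `κ_n(H) = Σ_{G ∈ 𝒢_n, E(G) ⊆ E(H)} (-1)^{|E(H)|-|E(G)|} π_n(G)`. -/
def kappaFun (n : ℕ) (H : SimpleGraph (Fin (n + 2))) : ℤ :=
  ∑ G ∈ Finset.univ.filter
      (fun G : SimpleGraph (Fin (n + 2)) => G.Connected ∧ G ≤ H),
    (-1 : ℤ) ^ (edgeCount H - edgeCount G) * piFun n G

/-- Embedding of the first factor's vertex set into that of the concatenation. -/
def emb1 (n m : ℕ) : Fin (n + 2) → Fin (n + m + 3) :=
  fun i => ⟨i.1, by have := i.isLt; omega⟩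

/-- Embedding of the second factor's vertex set into that of the concatenation:
the vertices `0,…,m+1` of `G₂` are relabelled as `n+1,…,n+m+2`. -/
def emb2 (n m : ℕ) : Fin (m + 2) → Fin (n + m + 3) :=
  fun j => ⟨n + 1 + j.1, by have := j.isLt; omega⟩

/-- The concatenation `G₁ ⊙ G₂`: the end-vertex `n+1` of `G₁` is identified with the
start-vertex of `G₂` and the edge sets are united. -/
def concatG {n m : ℕ} (G₁ : SimpleGraph (Fin (n + 2))) (G₂ : SimpleGraph (Fin (m + 2))) :
    SimpleGraph (Fin (n + m + 3)) :=
  SimpleGraph.fromRel fun u v =>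
    (∃ i j, G₁.Adj i j ∧ u = emb1 n m i ∧ v = emb1 n m j) ∨
    (∃ i j, G₂.Adj i j ∧ u = emb2 n m i ∧ v = emb2 n m j)


/-! Every edge of `G₁ ⊙ G₂` lies within `{0,…,n+1}` or within `{n+1,…,n+m+2}`, so `n+1` is a cut
vertex of every subgraph `H ≤ G₁ ⊙ G₂`, and `H` is the concatenation of its restrictions to the two
sides. Collapsing one side onto `n+1` maps walks of `H` to walks of the restriction to the other side,
so `H` is connected exactly when both restrictions are. -/

namespace SimpleGraph

variable {V W₁ W₂ : Type*} {G : SimpleGraph V}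

theorem fromRel_mono {r s : V → V → Prop} (h : ∀ a b, r a b → s a b) : fromRel r ≤ fromRel s :=
  fun a b ⟨hne, hr⟩ => ⟨hne, hr.imp (h a b) (h b a)⟩

theorem connected_of_hom_of_hom {G₁ : SimpleGraph W₁} {G₂ : SimpleGraph W₂}
    (φ₁ : G₁ →g G) (φ₂ : G₂ →g G) (h₁ : G₁.Connected) (h₂ : G₂.Connected)
    (hcover : ∀ v, v ∈ Set.range φ₁ ∨ v ∈ Set.range φ₂) {w₁ : W₁} {w₂ : W₂}
    (hmeet : φ₁ w₁ = φ₂ w₂) : G.Connected := by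
  have reach : ∀ v, G.Reachable v (φ₁ w₁) := by
    intro v
    rcases hcover v with ⟨a, rfl⟩ | ⟨b, rfl⟩
    · exact (h₁.preconnected a w₁).map φ₁
    · exact hmeet ▸ (h₂.preconnected b w₂).map φ₂
  have : Nonempty V := ⟨φ₁ w₁⟩
  exact ⟨fun u v => (reach u).trans (reach v).symm⟩

theorem Reachable.map_of_adj_eq_or_adj {G' : SimpleGraph W₁} (f : V → W₁)
    (hf : ∀ ⦃a b⦄, G.Adj a b → f a = f b ∨ G'.Adj (f a) (f b)) {u v : V}
    (h : G.Reachable u v) : G'.Reachable (f u) (f v) := by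
  obtain ⟨w⟩ := h
  induction w with
  | nil => rfl
  | cons hadj _ ih =>
    rcases hf hadj with heq | hadj'
    · exact heq ▸ ih
    · exact hadj'.reachable.trans ih

end SimpleGraph

open SimpleGraph

section Concat

variable {n m : ℕ} {G₁ H₁ : SimpleGraph (Fin (n + 2))} {G₂ H₂ : SimpleGraph (Fin (m + 2))}
  {H : SimpleGraph (Fin (n + m + 3))}

theorem emb1_injective : Function.Injective (emb1 n m) :=
  fun _ _ h => Fin.ext (congrArg Fin.val h :)

theorem emb2_injective : Function.Injective (emb2 n m) :=
  fun _ _ h => Fin.ext (by have : n + 1 + _ = n + 1 + _ := congrArg Fin.val h; omega)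

theorem emb1_eq_emb2_iff {i : Fin (n + 2)} {j : Fin (m + 2)} :
    emb1 n m i = emb2 n m j ↔ i = Fin.last (n + 1) ∧ j = 0 := by
  simp only [emb1, emb2, Fin.ext_iff, Fin.val_last, Fin.val_zero]
  omega

def proj1 (n m : ℕ) (v : Fin (n + m + 3)) : Fin (n + 2) :=
  ⟨min v.1 (n + 1), by omega⟩

def proj2 (n m : ℕ) (v : Fin (n + m + 3)) : Fin (m + 2) :=
  ⟨v.1 - (n + 1), by omega⟩

@[simp]
theorem proj1_emb1 (i : Fin (n + 2)) : proj1 n m (emb1 n m i) = i :=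
  Fin.ext (by simp only [emb1, proj1]; omega)

@[simp]
theorem proj2_emb2 (j : Fin (m + 2)) : proj2 n m (emb2 n m j) = j :=
  Fin.ext (by simp only [emb2, proj2]; omega)

theorem emb1_proj1 {v : Fin (n + m + 3)} (hv : v.1 ≤ n + 1) : emb1 n m (proj1 n m v) = v :=
  Fin.ext (by simp only [emb1, proj1]; omega)

theorem emb2_proj2 {v : Fin (n + m + 3)} (hv : n + 1 ≤ v.1) : emb2 n m (proj2 n m v) = v :=
  Fin.ext (by simp only [emb2, proj2]; omega)

theorem concatG_adj_same_side {u v : Fin (n + m + 3)} (h : (concatG G₁ G₂).Adj u v) :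
    (u.1 ≤ n + 1 ∧ v.1 ≤ n + 1) ∨ (n + 1 ≤ u.1 ∧ n + 1 ≤ v.1) := by
  obtain ⟨-, (⟨i, j, -, rfl, rfl⟩ | ⟨i, j, -, rfl, rfl⟩) |
      (⟨i, j, -, rfl, rfl⟩ | ⟨i, j, -, rfl, rfl⟩)⟩ := (fromRel_adj _ _ _).1 h
  all_goals simp only [emb1, emb2]; omega

@[simp]
theorem concatG_adj_emb1 {i j : Fin (n + 2)} :
    (concatG H₁ H₂).Adj (emb1 n m i) (emb1 n m j) ↔ H₁.Adj i j := by
  simpa [concatG, emb1_injective.eq_iff, emb1_eq_emb2_iff, adj_comm] using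
    fun h : H₁.Adj i j => h.ne

@[simp]
theorem concatG_adj_emb2 {i j : Fin (m + 2)} :
    (concatG H₁ H₂).Adj (emb2 n m i) (emb2 n m j) ↔ H₂.Adj i j := by
  simpa [concatG, emb2_injective.eq_iff, eq_comm (a := emb2 n m _), emb1_eq_emb2_iff, adj_comm]
    using fun h : H₂.Adj i j => h.ne

theorem concatG_mono (h₁ : H₁ ≤ G₁) (h₂ : H₂ ≤ G₂) : concatG H₁ H₂ ≤ concatG G₁ G₂ :=
  fromRel_mono fun _ _ => Or.imp (fun ⟨i, j, hij, hu, hv⟩ => ⟨i, j, h₁ hij, hu, hv⟩)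
    (fun ⟨i, j, hij, hu, hv⟩ => ⟨i, j, h₂ hij, hu, hv⟩)

theorem concatG_injective :
    Function.Injective fun p : SimpleGraph (Fin (n + 2)) × SimpleGraph (Fin (m + 2)) =>
      concatG p.1 p.2 := by
  intro p q h
  refine Prod.ext ?_ ?_ <;> ext i j
  · simpa using congrArg (fun K => K.Adj (emb1 n m i) (emb1 n m j)) h
  · simpa using congrArg (fun K => K.Adj (emb2 n m i) (emb2 n m j)) h

theorem concatG_connected (h₁ : H₁.Connected) (h₂ : H₂.Connected) :
    (concatG H₁ H₂).Connected := by
  have hcover (v : Fin (n + m + 3)) : v ∈ Set.range (emb1 n m) ∨ v ∈ Set.range (emb2 n m) := by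
    by_cases hv : v.1 ≤ n + 1
    · exact Or.inl ⟨proj1 n m v, emb1_proj1 hv⟩
    · exact Or.inr ⟨proj2 n m v, emb2_proj2 (by omega)⟩
  exact connected_of_hom_of_hom (G₁ := H₁) (G₂ := H₂) ⟨emb1 n m, concatG_adj_emb1.2⟩
    ⟨emb2 n m, concatG_adj_emb2.2⟩ h₁ h₂ hcover (emb1_eq_emb2_iff.2 ⟨rfl, rfl⟩)

theorem comap_emb1_le (hle : H ≤ concatG G₁ G₂) : H.comap (emb1 n m) ≤ G₁ :=
  fun _ _ h => concatG_adj_emb1.1 (hle h)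

theorem comap_emb2_le (hle : H ≤ concatG G₁ G₂) : H.comap (emb2 n m) ≤ G₂ :=
  fun _ _ h => concatG_adj_emb2.1 (hle h)

theorem le_of_comap_emb_le {K : SimpleGraph (Fin (n + m + 3))} (hle : H ≤ concatG G₁ G₂)
    (h₁ : H.comap (emb1 n m) ≤ K.comap (emb1 n m)) (h₂ : H.comap (emb2 n m) ≤ K.comap (emb2 n m)) :
    H ≤ K := by
  intro u v h
  rcases concatG_adj_same_side (hle h) with ⟨hu, hv⟩ | ⟨hu, hv⟩
  · rw [← emb1_proj1 hu, ← emb1_proj1 hv] at h ⊢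
    exact h₁ h
  · rw [← emb2_proj2 hu, ← emb2_proj2 hv] at h ⊢
    exact h₂ h

theorem concatG_comap_emb (hle : H ≤ concatG G₁ G₂) :
    concatG (H.comap (emb1 n m)) (H.comap (emb2 n m)) = H := by
  have hle' := concatG_mono (comap_emb1_le hle) (comap_emb2_le hle)
  refine le_antisymm (le_of_comap_emb_le hle' ?_ ?_) (le_of_comap_emb_le hle ?_ ?_) <;>
    intro i j <;> simp

theorem comap_emb1_connected (hH : H.Connected) (hle : H ≤ concatG G₁ G₂) :
    (H.comap (emb1 n m)).Connected := by
  have hproj : ∀ ⦃a b⦄, H.Adj a b →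
      proj1 n m a = proj1 n m b ∨ (H.comap (emb1 n m)).Adj (proj1 n m a) (proj1 n m b) := by
    intro a b h
    rcases concatG_adj_same_side (hle h) with ⟨ha, hb⟩ | ⟨ha, hb⟩
    · right
      rwa [comap_adj, emb1_proj1 ha, emb1_proj1 hb]
    · left
      exact Fin.ext (by simp only [proj1]; omega)
  refine ⟨fun i j => ?_⟩
  simpa using (hH.preconnected (emb1 n m i) (emb1 n m j)).map_of_adj_eq_or_adj _ hproj

theorem comap_emb2_connected (hH : H.Connected) (hle : H ≤ concatG G₁ G₂) :
    (H.comap (emb2 n m)).Connected := by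
  have hproj : ∀ ⦃a b⦄, H.Adj a b →
      proj2 n m a = proj2 n m b ∨ (H.comap (emb2 n m)).Adj (proj2 n m a) (proj2 n m b) := by
    intro a b h
    rcases concatG_adj_same_side (hle h) with ⟨ha, hb⟩ | ⟨ha, hb⟩
    · left
      exact Fin.ext (by simp only [proj2]; omega)
    · right
      rwa [comap_adj, emb2_proj2 ha, emb2_proj2 hb]
  refine ⟨fun i j => ?_⟩
  simpa using (hH.preconnected (emb2 n m i) (emb2 n m j)).map_of_adj_eq_or_adj _ hproj

theorem mem_support_of_le_concatG (hle : H ≤ concatG G₁ G₂) {a b : Fin (n + m + 3)}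
    (w : H.Walk a b) (ha : a.1 ≤ n) (hb : n < b.1) :
    (⟨n + 1, by omega⟩ : Fin (n + m + 3)) ∈ w.support := by
  obtain ⟨d, hd, hfst, hsnd⟩ := w.exists_boundary_dart {v | v.1 ≤ n} ha (by simpa using hb)
  have hcut : d.snd = ⟨n + 1, by omega⟩ := by
    simp only [Set.mem_ofPred_eq, not_le] at hfst hsnd
    have := concatG_adj_same_side (hle d.adj)
    exact Fin.ext (by dsimp only; omega)
  exact hcut ▸ w.dart_snd_mem_support_of_mem_darts hd

end Concat

/-- The map `(H₁, H₂) ↦ H₁ ⊙ H₂` is a bijection from pairs of connected spanning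
subgraphs of `G₁` and `G₂` onto the connected spanning subgraphs of `G₁ ⊙ G₂`;
in particular the vertex `n+1` is pivotal in every connected `H ≤ G₁ ⊙ G₂`. -/
theorem concat_bijOn_and_pivotal (n m : ℕ)
    (G₁ : SimpleGraph (Fin (n + 2))) (G₂ : SimpleGraph (Fin (m + 2))) :
    Set.BijOn
      (fun p : SimpleGraph (Fin (n + 2)) × SimpleGraph (Fin (m + 2)) =>
        concatG p.1 p.2)
      {p | p.1.Connected ∧ p.2.Connected ∧ p.1 ≤ G₁ ∧ p.2 ≤ G₂}
      {H : SimpleGraph (Fin (n + m + 3)) | H.Connected ∧ H ≤ concatG G₁ G₂} ∧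
    ∀ H : SimpleGraph (Fin (n + m + 3)), H.Connected → H ≤ concatG G₁ G₂ →
      ∀ w : H.Walk 0 (Fin.last (n + m + 2)),
        (⟨n + 1, by omega⟩ : Fin (n + m + 3)) ∈ w.support := by
  refine ⟨⟨?_, concatG_injective.injOn, ?_⟩, fun H _ hle w => mem_support_of_le_concatG hle w
    (by simp) (by rw [Fin.val_last]; omega)⟩
  · rintro ⟨H₁, H₂⟩ ⟨h₁, h₂, hle₁, hle₂⟩
    exact ⟨concatG_connected h₁ h₂, concatG_mono hle₁ hle₂⟩
  · rintro H ⟨hH, hle⟩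
    exact ⟨(H.comap (emb1 n m), H.comap (emb2 n m)),
      ⟨comap_emb1_connected hH hle, comap_emb2_connected hH hle, comap_emb1_le hle,
        comap_emb2_le hle⟩, concatG_comap_emb hle⟩

end
end
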